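/- With φ, r₁, r₂ as above, define Q(x,y) = (1/(r₁r₂)) · [[2r₂, 2x(1+2y²), x y r₁],[−x r₂, 2(2+x²y²), −2y r₁],[−2x y r₂, y(4−x²), 2r₁]]. Then Q(x,y) is orthogonal and φ(x,y) = Q(x,y)* Λ Q(x,y), where Λ = diag(1,−1,0). -/

import Mathlib

open Matrix

noncomputable def r1 (x y : ℝ) : ℝ := Real.sqrt (4 + x^2 + 4*x^2*y^2)
noncomputable def r2 (x y : ℝ) : ℝ := Real.sqrt (4 + 4*y^2 + x^2*y^2)

noncomputable def phi (x y : ℝ) : Matrix (Fin 3) (Fin 3) ℝ :=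
  ((r1 x y)^2 * (r2 x y)^2)⁻¹ •
    !![(4 - x^2) * (r2 x y)^2,  2*x*(r2 x y)^3,  0;
       2*x*(r2 x y)^3,  -4*(4 - x^2 - 4*x^2*y^4 + x^4*y^4),  2*y*(r1 x y)^3;
       0,  2*y*(r1 x y)^3,  y^2*(x^2 - 4)*(r1 x y)^2]

noncomputable def TX : Matrix (Fin 3) (Fin 3) ℝ := !![0,1,0;1,0,0;0,0,0]

noncomputable def Qmat (x y : ℝ) : Matrix (Fin 3) (Fin 3) ℝ :=
  (r1 x y * r2 x y)⁻¹ •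
    !![2*(r2 x y),  2*x*(1+2*y^2),  x*y*(r1 x y);
       -x*(r2 x y),  2*(2+x^2*y^2),  -2*y*(r1 x y);
       -2*x*y*(r2 x y),  y*(4-x^2),  2*(r1 x y)]

noncomputable def Lam : Matrix (Fin 3) (Fin 3) ℝ := Matrix.diagonal ![1, -1, 0]

/-!
Write `Q = (r₁r₂)⁻¹ • N` and `φ = (r₁r₂)⁻² • P`, where the entries of `N` and `P` are polynomials in
`x, y, r₁, r₂`. Both claims reduce to `Nᵀ N = (r₁r₂)² • 1` and `Nᵀ Λ N = P`, and these hold entrywise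
as polynomial identities in `x, y, r₁, r₂` modulo the two relations `r₁² = 4 + x² + 4x²y²` and
`r₂² = 4 + 4y² + x²y²`.
-/

theorem Matrix.transpose_fin_three {α : Type*} (a₁₁ a₁₂ a₁₃ a₂₁ a₂₂ a₂₃ a₃₁ a₃₂ a₃₃ : α) :
    !![a₁₁, a₁₂, a₁₃; a₂₁, a₂₂, a₂₃; a₃₁, a₃₂, a₃₃]ᵀ =
      !![a₁₁, a₂₁, a₃₁; a₁₂, a₂₂, a₃₂; a₁₃, a₂₃, a₃₃] := by
  ext i j
  fin_cases i <;> fin_cases j <;> rfl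

theorem Matrix.transpose_smul_mul_mul_smul {n R : Type*} [Fintype n] [CommSemiring R] (c : R)
    (M D : Matrix n n R) : (c • M)ᵀ * D * (c • M) = c ^ 2 • (Mᵀ * D * M) := by
  rw [transpose_smul, smul_mul, smul_mul, Matrix.mul_smul, smul_smul, sq]

def qmatNumerator (x y a b : ℝ) : Matrix (Fin 3) (Fin 3) ℝ :=
  !![2*b,  2*x*(1+2*y^2),  x*y*a;
     -x*b,  2*(2+x^2*y^2),  -2*y*a;
     -2*x*y*b,  y*(4-x^2),  2*a]

def phiNumerator (x y a b : ℝ) : Matrix (Fin 3) (Fin 3) ℝ :=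
  !![(4 - x^2) * b^2,  2*x*b^3,  0;
     2*x*b^3,  -4*(4 - x^2 - 4*x^2*y^4 + x^4*y^4),  2*y*a^3;
     0,  2*y*a^3,  y^2*(x^2 - 4)*a^2]

theorem qmatNumerator_transpose_mul_self {x y a b : ℝ} (ha : a^2 = 4 + x^2 + 4*x^2*y^2)
    (hb : b^2 = 4 + 4*y^2 + x^2*y^2) :
    (qmatNumerator x y a b)ᵀ * qmatNumerator x y a b = (a*b)^2 • 1 := by
  rw [qmatNumerator, transpose_fin_three, mul_fin_three, one_fin_three, smul_of]
  simp only [smul_vec3, smul_eq_mul, mul_one, mul_zero, EmbeddingLike.apply_eq_iff_eq, vecCons_inj,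
    and_true]
  grind

theorem qmatNumerator_transpose_mul_Lam_mul {x y a b : ℝ} (ha : a^2 = 4 + x^2 + 4*x^2*y^2)
    (hb : b^2 = 4 + 4*y^2 + x^2*y^2) :
    (qmatNumerator x y a b)ᵀ * Lam * qmatNumerator x y a b = phiNumerator x y a b := by
  rw [qmatNumerator, phiNumerator, Lam, diagonal_vec3, transpose_fin_three, mul_fin_three,
    mul_fin_three]
  simp only [EmbeddingLike.apply_eq_iff_eq, vecCons_inj, and_true]
  grind

theorem r1_pos (x y : ℝ) : 0 < r1 x y := Real.sqrt_pos.2 (by positivity)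

theorem r2_pos (x y : ℝ) : 0 < r2 x y := Real.sqrt_pos.2 (by positivity)

theorem r1_sq (x y : ℝ) : r1 x y ^ 2 = 4 + x^2 + 4*x^2*y^2 := Real.sq_sqrt (by positivity)

theorem r2_sq (x y : ℝ) : r2 x y ^ 2 = 4 + 4*y^2 + x^2*y^2 := Real.sq_sqrt (by positivity)

theorem Qmat_eq_smul (x y : ℝ) :
    Qmat x y = (r1 x y * r2 x y)⁻¹ • qmatNumerator x y (r1 x y) (r2 x y) :=
  rfl

theorem phi_eq_smul (x y : ℝ) :
    phi x y = ((r1 x y * r2 x y) ^ 2)⁻¹ • phiNumerator x y (r1 x y) (r2 x y) := by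
  rw [mul_pow]
  rfl

theorem stmt_4 (x y : ℝ) :
    (Qmat x y)ᵀ * Qmat x y = 1 ∧ phi x y = (Qmat x y)ᵀ * Lam * Qmat x y := by
  have hr : r1 x y * r2 x y ≠ 0 := (mul_pos (r1_pos x y) (r2_pos x y)).ne'
  rw [Qmat_eq_smul]
  constructor
  · rw [← Matrix.mul_one (_ᵀ), transpose_smul_mul_mul_smul, Matrix.mul_one,
      qmatNumerator_transpose_mul_self (r1_sq x y) (r2_sq x y), smul_smul, inv_pow,
      inv_mul_cancel₀ (pow_ne_zero 2 hr), one_smul]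
  · rw [phi_eq_smul, transpose_smul_mul_mul_smul,
      qmatNumerator_transpose_mul_Lam_mul (r1_sq x y) (r2_sq x y), inv_pow]
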